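/- Let G be a simple graph and k a nonnegative integer. Let C and C' be cliques of G of size at least k, contained in maximal cliques M and M' respectively. If there is a path from M to M' in the graph whose vertices are the maximal cliques of G and where two maximal cliques M_1, M_2 are adjacent when |M_1 ∩ M_2| ≥ k, then there exists a TAR(k)-sequence from C to C' in G. -/

import Mathlib

/-
Within a single clique `D`, any subclique `C` with `|C| ≥ k` reaches `D` by adding the vertices
of `D \ C` one at a time, so any two subcliques of `D` of size at least `k` are connected by
going up to `D` and back down. Along an edge `M₁ M₂` of the maximal-clique graph the clique
`M₁ ∩ M₂` has at least `k` vertices and lies in both, so it links the subcliques of `M₁` to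
those of `M₂`; following the path from `M` to `M'` chains these moves together.
-/

variable {V : Type*} [DecidableEq V]

/-- One TAR step: add or remove a single vertex. -/
def TARStep (C C' : Finset V) : Prop :=
  (∃ v ∉ C, C' = insert v C) ∨ (∃ v ∈ C, C' = C.erase v)

/-- A TAR(k)-sequence of cliques of `G` of length `ℓ`, given by `f` on indices `0..ℓ`. -/
def TARSeq (G : SimpleGraph V) (k ℓ : ℕ) (f : ℕ → Finset V) : Prop :=
  (∀ i ≤ ℓ, G.IsClique (f i : Set V) ∧ k ≤ (f i).card) ∧
  ∀ i < ℓ, TARStep (f i) (f (i + 1))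

/-- A maximal clique of `G`. -/
def IsMaximalClique (G : SimpleGraph V) (M : Finset V) : Prop :=
  G.IsClique (M : Set V) ∧
    ∀ D : Finset V, G.IsClique (D : Set V) → M ⊆ D → M = D

/-- The `k`-intersection maximal-clique graph: vertices are the maximal cliques of `G`,
two distinct maximal cliques being adjacent when their intersection has at least `k` vertices. -/
def MCGraph (G : SimpleGraph V) (k : ℕ) :
    SimpleGraph {M : Finset V // IsMaximalClique G M} where
  Adj M M' := M ≠ M' ∧ k ≤ (M.1 ∩ M'.1).card
  symm := by
    constructor
    intro M M' h
    exact ⟨h.1.symm, by rw [Finset.inter_comm]; exact h.2⟩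
  loopless := by constructor; intro M h; exact h.1 rfl

theorem TARStep.symm {C D : Finset V} (h : TARStep C D) : TARStep D C := by
  rcases h with ⟨v, hv, rfl⟩ | ⟨v, hv, rfl⟩
  · exact Or.inr ⟨v, Finset.mem_insert_self v C, (Finset.erase_insert hv).symm⟩
  · exact Or.inl ⟨v, Finset.notMem_erase v C, (Finset.insert_erase hv).symm⟩

namespace TARSeq

variable {G : SimpleGraph V} {k ℓ ℓ₂ : ℕ} {f g : ℕ → Finset V}

theorem reverse (h : TARSeq G k ℓ f) : TARSeq G k ℓ (fun i => f (ℓ - i)) := by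
  refine ⟨fun i _ => h.1 _ (Nat.sub_le _ _), fun i hi => ?_⟩
  have e : ℓ - i = ℓ - (i + 1) + 1 := by omega
  simpa only [e] using (h.2 _ (by omega)).symm

theorem append (hf : TARSeq G k ℓ f) (hg : TARSeq G k ℓ₂ g) (hfg : f ℓ = g 0) :
    TARSeq G k (ℓ + ℓ₂) (fun i => if i ≤ ℓ then f i else g (i - ℓ)) := by
  constructor
  · intro i hi
    by_cases h : i ≤ ℓ
    · simpa [h] using hf.1 i h
    · simpa [h] using hg.1 (i - ℓ) (by omega)
  · intro i hi
    rcases lt_trichotomy i ℓ with h | rfl | h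
    · simpa [h.le, Nat.succ_le_of_lt h] using hf.2 i h
    · simpa [hfg] using hg.2 0 (by omega)
    · have e : i + 1 - ℓ = i - ℓ + 1 := by omega
      simpa only [if_neg h.not_ge, if_neg (by omega : ¬ i + 1 ≤ ℓ), e]
        using hg.2 (i - ℓ) (by omega)

end TARSeq

def TARReachable (G : SimpleGraph V) (k : ℕ) (C D : Finset V) : Prop :=
  ∃ (ℓ : ℕ) (f : ℕ → Finset V), TARSeq G k ℓ f ∧ f 0 = C ∧ f ℓ = D

namespace TARReachable

variable {G : SimpleGraph V} {k : ℕ} {C D E : Finset V}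

theorem refl (hC : G.IsClique (C : Set V)) (hk : k ≤ C.card) : TARReachable G k C C :=
  ⟨0, fun _ => C, ⟨fun _ _ => ⟨hC, hk⟩, fun _ h => (Nat.not_lt_zero _ h).elim⟩, rfl, rfl⟩

theorem single (hC : G.IsClique (C : Set V)) (hkC : k ≤ C.card)
    (hD : G.IsClique (D : Set V)) (hkD : k ≤ D.card) (h : TARStep C D) :
    TARReachable G k C D := by
  refine ⟨1, fun i => if i = 0 then C else D, ⟨fun i _ => ?_, fun i hi => ?_⟩, rfl, rfl⟩
  · by_cases hi : i = 0 <;> simp [hi, hC, hkC, hD, hkD]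
  · obtain rfl : i = 0 := by omega
    simpa using h

theorem symm (h : TARReachable G k C D) : TARReachable G k D C := by
  obtain ⟨ℓ, f, hf, rfl, rfl⟩ := h
  exact ⟨ℓ, _, hf.reverse, by simp, by simp⟩

theorem trans (h₁ : TARReachable G k C D) (h₂ : TARReachable G k D E) :
    TARReachable G k C E := by
  obtain ⟨ℓ₁, f, hf, rfl, hfD⟩ := h₁
  obtain ⟨ℓ₂, g, hg, hgD, rfl⟩ := h₂
  refine ⟨ℓ₁ + ℓ₂, _, hf.append hg (hfD.trans hgD.symm), by simp, ?_⟩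
  rcases Nat.eq_zero_or_pos ℓ₂ with rfl | hpos
  · simp [hfD, hgD]
  · simp only [if_neg (by omega : ¬ ℓ₁ + ℓ₂ ≤ ℓ₁), Nat.add_sub_cancel_left]

theorem of_subset (hD : G.IsClique (D : Set V)) (hCD : C ⊆ D) (hk : k ≤ C.card) :
    TARReachable G k C D := by
  have hC : G.IsClique (C : Set V) := hD.subset (Finset.coe_subset.mpr hCD)
  suffices ∀ S : Finset V, G.IsClique ((C ∪ S : Finset V) : Set V) →
      TARReachable G k C (C ∪ S) by
    have h := this (D \ C)
    rw [Finset.union_sdiff_of_subset hCD] at h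
    exact h hD
  intro S
  induction S using Finset.induction_on with
  | empty => simpa using fun _ => refl hC hk
  | insert v S _ ih =>
    intro hS
    rw [Finset.union_insert] at hS ⊢
    have hCS : G.IsClique ((C ∪ S : Finset V) : Set V) :=
      hS.subset (Finset.coe_subset.mpr (Finset.subset_insert v _))
    have hkCS : k ≤ (C ∪ S).card := hk.trans (Finset.card_le_card Finset.subset_union_left)
    by_cases hv : v ∈ C ∪ S
    · simpa [Finset.insert_eq_of_mem hv] using ih hCS
    · exact (ih hCS).trans <| single hCS hkCS hS
        (hkCS.trans (Finset.card_le_card (Finset.subset_insert v _))) (Or.inl ⟨v, hv, rfl⟩)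

theorem of_subset_subset (hE : G.IsClique (E : Set V)) (hC : C ⊆ E) (hD : D ⊆ E)
    (hkC : k ≤ C.card) (hkD : k ≤ D.card) : TARReachable G k C D :=
  (of_subset hE hC hkC).trans (of_subset hE hD hkD).symm

end TARReachable

theorem stmt10_general (G : SimpleGraph V) (k : ℕ) (C C' : Finset V)
    (hkC : k ≤ C.card) (hkC' : k ≤ C'.card)
    (M M' : {M : Finset V // IsMaximalClique G M})
    (hM : C ⊆ M.1) (hM' : C' ⊆ M'.1)
    (hreach : (MCGraph G k).Reachable M M') :
    ∃ (ℓ : ℕ) (f : ℕ → Finset V), TARSeq G k ℓ f ∧ f 0 = C ∧ f ℓ = C' := by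
  obtain ⟨w⟩ := hreach
  induction w generalizing C with
  | @nil M => exact TARReachable.of_subset_subset M.2.1 hM hM' hkC hkC'
  | @cons M₁ M₂ _ hadj _ ih =>
    exact (TARReachable.of_subset_subset M₁.2.1 hM Finset.inter_subset_left hkC hadj.2).trans
      (ih (M₁.1 ∩ M₂.1) hadj.2 Finset.inter_subset_right hM')

theorem stmt10 (G : SimpleGraph V) (k : ℕ) (C C' : Finset V)
    (hC : G.IsClique (C : Set V)) (hC' : G.IsClique (C' : Set V))
    (hkC : k ≤ C.card) (hkC' : k ≤ C'.card)
    (M M' : {M : Finset V // IsMaximalClique G M})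
    (hM : C ⊆ M.1) (hM' : C' ⊆ M'.1)
    (hreach : (MCGraph G k).Reachable M M') :
    ∃ (ℓ : ℕ) (f : ℕ → Finset V), TARSeq G k ℓ f ∧ f 0 = C ∧ f ℓ = C' :=
  stmt10_general G k C C' hkC hkC' M M' hM hM' hreach
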